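/- Let λ > 1/2 and P ∈ ℝ, and let (ψ, (a, b)) be a local solution of the homogeneous Euler ODE with parameters (λ, P) with b − a ≤ 2π. Then ∫_a^b ψ′(θ)² dθ < ∞ (so ψ belongs to H¹(a, b) automatically), and the product ψψ′ extends continuously to [a, b] with value 0 at both a and b. -/

import Mathlib

/-!
With `β = 2(λ-1)/λ`, the ODE makes `(ψ'² + λ²ψ² + 2P) ψ^(-β)` a first integral.
Hence `(ψψ')² = C ψ^(2+β) - λ²ψ⁴ - 2Pψ²`, and `2 + β = 2(2λ-1)/λ > 0` for `λ > 1/2`, so `(ψψ')²`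
extends continuously by `0` to `[a, b]`, and therefore so does `ψψ'`.
The ODE also gives `(ψψ')' = ((2λ-1)/λ) ψ'² + 2(λ-1)P/λ - λψ²`: the derivative of a function
continuous on `[a, b]`, bounded below, hence integrable, and `ψ'²` is integrable with it.
-/

open Set MeasureTheory Filter Topology

theorem ContinuousWithinAt.of_sq_of_eq_zero {f : ℝ → ℝ} {s : Set ℝ} {x : ℝ} (hx : f x = 0)
    (hf : ContinuousWithinAt (fun t => f t ^ 2) s x) : ContinuousWithinAt f s x := by
  have hsq : Tendsto (fun t => f t ^ 2) (𝓝[s] x) (𝓝 0) := by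
    simpa [ContinuousWithinAt, hx] using hf
  have habs : Tendsto (fun t => |f t|) (𝓝[s] x) (𝓝 0) := by
    simpa only [Real.sqrt_sq_eq_abs, Real.sqrt_zero] using hsq.sqrt
  rw [ContinuousWithinAt, hx]
  exact (tendsto_zero_iff_abs_tendsto_zero f).mpr habs

theorem continuousOn_Icc_indicator_Ioo {f q : ℝ → ℝ} {a b : ℝ}
    (hf : ContinuousOn f (Ioo a b)) (hq : ContinuousOn q (Icc a b))
    (hfq : ∀ x ∈ Ioo a b, f x ^ 2 = q x) (ha : q a = 0) (hb : q b = 0) :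
    ContinuousOn ((Ioo a b).indicator f) (Icc a b) := by
  intro x hx
  by_cases hxI : x ∈ Ioo a b
  · have hcont : ContinuousOn ((Ioo a b).indicator f) (Ioo a b) :=
      hf.congr fun y hy => indicator_of_mem hy f
    exact (hcont.continuousAt (isOpen_Ioo.mem_nhds hxI)).continuousWithinAt
  · have hsq : EqOn (fun t => (Ioo a b).indicator f t ^ 2) q (Icc a b) := by
      intro t ht
      by_cases htI : t ∈ Ioo a b
      · simp only [indicator_of_mem htI, hfq t htI]
      · have hend : t ∈ ({a, b} : Set ℝ) := by
          rw [← Icc_sdiff_Ioo_same (hx.1.trans hx.2)]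
          exact ⟨ht, htI⟩
        rcases hend with rfl | rfl <;> simp [ha, hb]
    exact ContinuousWithinAt.of_sq_of_eq_zero (indicator_of_notMem hxI f)
      ((hq x hx).congr hsq (hsq hx))

theorem intervalIntegrable_of_hasDerivAt_of_le {f g : ℝ → ℝ} {a b c : ℝ} (hab : a ≤ b)
    (hg : ContinuousOn g (Icc a b)) (hderiv : ∀ x ∈ Ioo a b, HasDerivAt g (f x) x)
    (hf : ∀ x ∈ Ioo a b, c ≤ f x) : IntervalIntegrable f volume a b := by
  have hshift : IntegrableOn (fun x => f x - c) (Ioc a b) :=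
    intervalIntegral.integrableOn_deriv_of_nonneg (g := fun x => g x - c * x)
      (hg.sub (continuousOn_const.mul continuousOn_id))
      (fun x hx => ((hderiv x hx).sub ((hasDerivAt_id' x).const_mul c)).congr_deriv (by ring))
      (fun x hx => sub_nonneg.mpr (hf x hx))
  rw [intervalIntegrable_iff_integrableOn_Ioc_of_le hab]
  refine (hshift.add (integrableOn_const (C := c) (by simp))).congr_fun (fun x _ => ?_)
    measurableSet_Ioc
  simp

noncomputable def eulerFirstIntegral (lam P : ℝ) (ψ ψ' : ℝ → ℝ) (θ : ℝ) : ℝ :=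
  (ψ' θ ^ 2 + lam ^ 2 * ψ θ ^ 2 + 2 * P) * ψ θ ^ (-(2 * (lam - 1) / lam))

section EulerODE

variable {lam P : ℝ} {ψ ψ' ψ'' : ℝ → ℝ}

theorem hasDerivAt_eulerFirstIntegral {θ : ℝ} (hlam : lam ≠ 0) (hψ : 0 < ψ θ)
    (hd1 : HasDerivAt ψ (ψ' θ) θ) (hd2 : HasDerivAt ψ' (ψ'' θ) θ)
    (hode : 2 * (lam - 1) * P =
      -(lam - 1) * ψ' θ ^ 2 + lam ^ 2 * ψ θ ^ 2 + lam * ψ'' θ * ψ θ) :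
    HasDerivAt (eulerFirstIntegral lam P ψ ψ') 0 θ := by
  set β := 2 * (lam - 1) / lam
  have hpow : HasDerivAt (fun t => ψ t ^ (-β)) (ψ' θ * (-β) * (ψ θ ^ (-β) / ψ θ)) θ := by
    simpa only [Real.rpow_sub_one hψ.ne'] using hd1.rpow_const (p := -β) (Or.inl hψ.ne')
  refine ((((hd2.pow 2).add ((hd1.pow 2).const_mul (lam ^ 2))).add_const (2 * P)).mul
    hpow).congr_deriv ?_
  simp only [β, Pi.add_apply, Pi.pow_apply]
  field_simp
  linear_combination (-2 * ψ' θ * ψ θ ^ (-(2 * (lam - 1) / lam))) * hode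

theorem exists_eulerFirstIntegral_eq {a b : ℝ} (hlam : lam ≠ 0)
    (hpos : ∀ θ ∈ Ioo a b, 0 < ψ θ)
    (hd1 : ∀ θ ∈ Ioo a b, HasDerivAt ψ (ψ' θ) θ)
    (hd2 : ∀ θ ∈ Ioo a b, HasDerivAt ψ' (ψ'' θ) θ)
    (hode : ∀ θ ∈ Ioo a b, 2 * (lam - 1) * P =
      -(lam - 1) * ψ' θ ^ 2 + lam ^ 2 * ψ θ ^ 2 + lam * ψ'' θ * ψ θ) :
    ∃ C, ∀ θ ∈ Ioo a b, eulerFirstIntegral lam P ψ ψ' θ = C := by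
  have hF := fun θ hθ =>
    hasDerivAt_eulerFirstIntegral hlam (hpos θ hθ) (hd1 θ hθ) (hd2 θ hθ) (hode θ hθ)
  exact isOpen_Ioo.exists_is_const_of_deriv_eq_zero isPreconnected_Ioo
    (fun θ hθ => (hF θ hθ).differentiableAt.differentiableWithinAt)
    (fun θ hθ => (hF θ hθ).deriv)

theorem sq_mul_deriv_eq_of_eulerFirstIntegral_eq {θ C : ℝ} (hlam : lam ≠ 0) (hψ : 0 < ψ θ)
    (hC : eulerFirstIntegral lam P ψ ψ' θ = C) :
    (ψ θ * ψ' θ) ^ 2 =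
      C * ψ θ ^ (2 * (2 * lam - 1) / lam) - lam ^ 2 * ψ θ ^ 4 - 2 * P * ψ θ ^ 2 := by
  have hsplit : ψ θ ^ (2 * (2 * lam - 1) / lam) =
      ψ θ ^ 2 * ψ θ ^ (2 * (lam - 1) / lam) := by
    rw [← Real.rpow_natCast, ← Real.rpow_add hψ]
    congr 1
    field_simp
    ring
  have hinv : ψ θ ^ (-(2 * (lam - 1) / lam)) * ψ θ ^ (2 * (lam - 1) / lam) = 1 := by
    rw [← Real.rpow_add hψ, neg_add_cancel, Real.rpow_zero]
  rw [← hC, hsplit, eulerFirstIntegral]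
  linear_combination (-(ψ θ ^ 2) * (ψ' θ ^ 2 + lam ^ 2 * ψ θ ^ 2 + 2 * P)) * hinv

theorem hasDerivAt_mul_deriv {θ : ℝ} (hlam : lam ≠ 0)
    (hd1 : HasDerivAt ψ (ψ' θ) θ) (hd2 : HasDerivAt ψ' (ψ'' θ) θ)
    (hode : 2 * (lam - 1) * P =
      -(lam - 1) * ψ' θ ^ 2 + lam ^ 2 * ψ θ ^ 2 + lam * ψ'' θ * ψ θ) :
    HasDerivAt (fun t => ψ t * ψ' t)
      ((2 * lam - 1) / lam * ψ' θ ^ 2 + 2 * (lam - 1) * P / lam - lam * ψ θ ^ 2) θ := by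
  refine (hd1.mul hd2).congr_deriv ?_
  field_simp
  linear_combination -hode

theorem intervalIntegrable_deriv_sq_of_continuousOn {a b : ℝ} (hlam : 1 / 2 < lam) (hab : a ≤ b)
    (hcont : ContinuousOn ψ (Icc a b))
    (hd1 : ∀ θ ∈ Ioo a b, HasDerivAt ψ (ψ' θ) θ)
    (hd2 : ∀ θ ∈ Ioo a b, HasDerivAt ψ' (ψ'' θ) θ)
    (hode : ∀ θ ∈ Ioo a b, 2 * (lam - 1) * P =
      -(lam - 1) * ψ' θ ^ 2 + lam ^ 2 * ψ θ ^ 2 + lam * ψ'' θ * ψ θ)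
    {h : ℝ → ℝ} (hh : ContinuousOn h (Icc a b)) (hh_eq : ∀ θ ∈ Ioo a b, h θ = ψ θ * ψ' θ) :
    IntervalIntegrable (fun θ => ψ' θ ^ 2) volume a b := by
  have hlam0 : lam ≠ 0 := by positivity
  have hc : 0 < (2 * lam - 1) / lam := div_pos (by linarith) (by linarith)
  obtain ⟨S, hS⟩ := isCompact_Icc.bddAbove_image (hcont.pow 2)
  have hderiv : ∀ θ ∈ Ioo a b, HasDerivAt h
      ((2 * lam - 1) / lam * ψ' θ ^ 2 + 2 * (lam - 1) * P / lam - lam * ψ θ ^ 2) θ :=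
    fun θ hθ => (hasDerivAt_mul_deriv hlam0 (hd1 θ hθ) (hd2 θ hθ) (hode θ hθ))
      |>.congr_of_eventuallyEq (eventually_of_mem (isOpen_Ioo.mem_nhds hθ) hh_eq)
  have hlower : ∀ θ ∈ Ioo a b, 2 * (lam - 1) * P / lam - lam * S ≤
      (2 * lam - 1) / lam * ψ' θ ^ 2 + 2 * (lam - 1) * P / lam - lam * ψ θ ^ 2 := by
    intro θ hθ
    have hψS : ψ θ ^ 2 ≤ S := hS (mem_image_of_mem _ (Ioo_subset_Icc_self hθ))
    nlinarith [mul_nonneg hc.le (sq_nonneg (ψ' θ))]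
  have hψ2 : IntervalIntegrable (fun θ => ψ θ ^ 2) volume a b :=
    (hcont.pow 2).intervalIntegrable_of_Icc hab
  have hmul := intervalIntegrable_of_hasDerivAt_of_le hab hh hderiv hlower
  convert ((hmul.sub (intervalIntegrable_const (c := 2 * (lam - 1) * P / lam))).add
    (hψ2.const_mul lam)).const_mul (lam / (2 * lam - 1)) using 1
  funext θ
  field_simp
  rw [eq_div_iff (by linarith)]
  ring

end EulerODE

theorem automatic_H1_large_lambda_general
    (lam P : ℝ) (hlam : 1/2 < lam)
    (a b : ℝ) (hab : a < b)
    (ψ ψ' ψ'' : ℝ → ℝ)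
    (hcont : ContinuousOn ψ (Set.Icc a b))
    (ha : ψ a = 0) (hb : ψ b = 0)
    (hpos : ∀ θ ∈ Set.Ioo a b, 0 < ψ θ)
    (hd1 : ∀ θ ∈ Set.Ioo a b, HasDerivAt ψ (ψ' θ) θ)
    (hd2 : ∀ θ ∈ Set.Ioo a b, HasDerivAt ψ' (ψ'' θ) θ)
    (hode : ∀ θ ∈ Set.Ioo a b, 2 * (lam - 1) * P =
      -(lam - 1) * (ψ' θ) ^ 2 + lam ^ 2 * (ψ θ) ^ 2 + lam * (ψ'' θ) * (ψ θ)) :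
    IntervalIntegrable (fun θ => (ψ' θ) ^ 2) MeasureTheory.volume a b ∧
    ∃ h : ℝ → ℝ, ContinuousOn h (Set.Icc a b) ∧
      (∀ θ ∈ Set.Ioo a b, h θ = ψ θ * ψ' θ) ∧ h a = 0 ∧ h b = 0 := by
  have hlam0 : lam ≠ 0 := by positivity
  have hr : 0 < 2 * (2 * lam - 1) / lam := div_pos (by linarith) (by linarith)
  obtain ⟨C, hC⟩ := exists_eulerFirstIntegral_eq hlam0 hpos hd1 hd2 hode
  set q : ℝ → ℝ := fun θ =>
    C * ψ θ ^ (2 * (2 * lam - 1) / lam) - lam ^ 2 * ψ θ ^ 4 - 2 * P * ψ θ ^ 2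
  have hq : ContinuousOn q (Icc a b) :=
    ((continuousOn_const.mul (hcont.rpow_const fun _ _ => Or.inr hr.le)).sub
      (continuousOn_const.mul (hcont.pow 4))).sub (continuousOn_const.mul (hcont.pow 2))
  have hψψ' : ContinuousOn (fun θ => ψ θ * ψ' θ) (Ioo a b) := fun θ hθ =>
    ((hd1 θ hθ).continuousAt.mul (hd2 θ hθ).continuousAt).continuousWithinAt
  have hh := continuousOn_Icc_indicator_Ioo hψψ' hq
    (fun θ hθ => sq_mul_deriv_eq_of_eulerFirstIntegral_eq hlam0 (hpos θ hθ) (hC θ hθ))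
    (by simp [q, ha, hr.ne']) (by simp [q, hb, hr.ne'])
  have hh_eq : ∀ θ ∈ Ioo a b, (Ioo a b).indicator (fun θ => ψ θ * ψ' θ) θ = ψ θ * ψ' θ :=
    fun θ hθ => indicator_of_mem hθ _
  exact ⟨intervalIntegrable_deriv_sq_of_continuousOn hlam hab.le hcont hd1 hd2 hode hh hh_eq,
    _, hh, hh_eq, indicator_of_notMem (by simp) _, indicator_of_notMem (by simp) _⟩

/-- For `λ > 1/2` every local solution `(ψ, (a,b))` of the homogeneous Euler ODE
with `b - a ≤ 2π` automatically has finite energy `∫_a^b ψ'² < ∞`, and `ψψ'` extends continuously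
to `[a,b]` vanishing at both endpoints. -/
theorem automatic_H1_large_lambda
    (lam P : ℝ) (hlam : 1/2 < lam)
    (a b : ℝ) (hab : a < b) (hspan : b - a ≤ 2 * Real.pi)
    (ψ ψ' ψ'' : ℝ → ℝ)
    (hcont : ContinuousOn ψ (Set.Icc a b))
    (ha : ψ a = 0) (hb : ψ b = 0)
    (hpos : ∀ θ ∈ Set.Ioo a b, 0 < ψ θ)
    (hd1 : ∀ θ ∈ Set.Ioo a b, HasDerivAt ψ (ψ' θ) θ)
    (hd2 : ∀ θ ∈ Set.Ioo a b, HasDerivAt ψ' (ψ'' θ) θ)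
    (hode : ∀ θ ∈ Set.Ioo a b, 2 * (lam - 1) * P =
      -(lam - 1) * (ψ' θ) ^ 2 + lam ^ 2 * (ψ θ) ^ 2 + lam * (ψ'' θ) * (ψ θ)) :
    IntervalIntegrable (fun θ => (ψ' θ) ^ 2) MeasureTheory.volume a b ∧
    ∃ h : ℝ → ℝ, ContinuousOn h (Set.Icc a b) ∧
      (∀ θ ∈ Set.Ioo a b, h θ = ψ θ * ψ' θ) ∧ h a = 0 ∧ h b = 0 :=
  automatic_H1_large_lambda_general lam P hlam a b hab ψ ψ' ψ'' hcont ha hb hpos hd1 hd2 hode
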